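/- Let E = ℂ^r, let q be a positive integer, and let K ⊆ H²(ℂ^d) ⊗ E be the closed span of all monomials z^n ⊗ ζ with n ∈ ℕ^d satisfying n_1 ≤ q and ζ ∈ E. Then the restriction B of S_1^* to K satisfies B^*B ∈ 𝓛^p for every p > d; equivalently, the compression P_K S_1^* S_1 P_K belongs to the Schatten class 𝓛^p for every p > d. -/

import Mathlib

/-!
`S₁* S₁` is diagonal in the monomial basis: since `‖z^{n+e₁}‖² = (n₁+1)/(|n|+1) · ‖z^n‖²`, it
multiplies `z^n ⊗ ζ` by `(n₁+1)/(|n|+1)`. On `K` we have `n₁ ≤ q`, so all these eigenvalues are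
at most `(q+1)/(N+1)` except on the at most `r·N^d` basis vectors with `|n| < N`. Cutting those
out of the diagonal operator changes it by an operator of rank `≤ r·N^d`, so the `k`-th singular
value of `P_K S₁* S₁ P_K` is `O(k^{-1/d})`, and its `p`-th powers are summable for `p > d`.
-/

open scoped ENNReal

noncomputable section

set_option synthInstance.maxHeartbeats 400000
set_option maxHeartbeats 1000000

namespace Arveson

/-- The `n`-th approximation number of a bounded operator between complex normed spaces:
the distance from `T` to the set of operators of rank at most `n`.  For operators between
Hilbert spaces this is precisely the `n`-th singular value of `T`. -/
noncomputable def approxNum {H K : Type*} [NormedAddCommGroup H] [NormedSpace ℂ H]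
    [NormedAddCommGroup K] [NormedSpace ℂ K] (T : H →L[ℂ] K) (n : ℕ) : ℝ :=
  sInf {c : ℝ | ∃ F : H →L[ℂ] K, Module.rank ℂ (LinearMap.range (F : H →ₗ[ℂ] K)) ≤ n ∧ c = ‖T - F‖}

/-- Membership in the Schatten–von Neumann class `𝓛^p`: the singular value sequence
(= the sequence of approximation numbers) is `p`-summable. -/
def MemSchatten {H K : Type*} [NormedAddCommGroup H] [NormedSpace ℂ H]
    [NormedAddCommGroup K] [NormedSpace ℂ K] (p : ℝ) (T : H →L[ℂ] K) : Prop :=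
  Summable fun n => approxNum T n ^ p

/-- Membership in `𝓛^p` for an extended real exponent `p`, where `𝓛^∞` is interpreted as
the class of compact operators. -/
def MemSchattenE {H K : Type*} [NormedAddCommGroup H] [NormedSpace ℂ H]
    [NormedAddCommGroup K] [NormedSpace ℂ K] (p : ℝ≥0∞) (T : H →L[ℂ] K) : Prop :=
  if p = ∞ then IsCompactOperator T else MemSchatten p.toReal T

/-- The orthogonal projection onto a closed subspace `M`, as an operator `H →L[ℂ] H`
(junk value `0` if `M` is not closed). -/
noncomputable def orthProjCLM {H : Type*} [NormedAddCommGroup H] [InnerProductSpace ℂ H]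
    [CompleteSpace H] (M : Submodule ℂ H) : H →L[ℂ] H :=
  open scoped Classical in
  if h : IsClosed (M : Set H) then
    haveI : CompleteSpace M := h.completeSpace_coe
    M.subtypeL.comp M.orthogonalProjectionOnto
  else 0

/-- `‖z^n‖²` in the Drury–Arveson space `H²(ℂ^d)`: `n₁!⋯n_d!/(n₁+⋯+n_d)!`. -/
def daWeight {d : ℕ} (n : Fin d → ℕ) : ℝ :=
  ((∏ i, (n i).factorial : ℕ) : ℝ) / (((∑ i, n i).factorial : ℕ) : ℝ)

/-- An abstract presentation of the `d`-shift `(S₁,…,S_d)` acting on `H²(ℂ^d) ⊗ E`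
(the symmetric Fock space / Drury–Arveson space with coefficients in `E`).
`mono n` sends `ζ : E` to the monomial `z^n ⊗ ζ`; the axioms say that the monomials are
mutually orthogonal with `⟪z^n ⊗ ζ, z^n ⊗ η⟫ = (n₁!⋯n_d!/(n₁+⋯+n_d)!)·⟪ζ, η⟫`, that
they span a dense subspace, and that `S_k (z^n ⊗ ζ) = z^{n+e_k} ⊗ ζ`.  These axioms
determine the `d`-shift of rank `dim E` uniquely up to unitary equivalence. -/
structure DShift (d : ℕ) (E : Type*) [NormedAddCommGroup E] [InnerProductSpace ℂ E]
    (H : Type*) [NormedAddCommGroup H] [InnerProductSpace ℂ H] where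
  mono : (Fin d → ℕ) → E →ₗ[ℂ] H
  S : Fin d → H →L[ℂ] H
  inner_mono : ∀ (n m : Fin d → ℕ) (ζ η : E),
    (inner ℂ (mono n ζ) (mono m η) : ℂ) =
      if n = m then (daWeight n : ℂ) * (inner ℂ ζ η : ℂ) else 0
  total : (Submodule.span ℂ {x : H | ∃ n ζ, x = mono n ζ}).topologicalClosure = ⊤
  shift_mono : ∀ (k : Fin d) (n : Fin d → ℕ) (ζ : E),
    S k (mono n ζ) = mono (fun i => if i = k then n i + 1 else n i) ζ

variable {d : ℕ} {E : Type*} [NormedAddCommGroup E] [InnerProductSpace ℂ E]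
  {H₀ : Type*} [NormedAddCommGroup H₀] [InnerProductSpace ℂ H₀]

/-- `M` is invariant under each of the operators `S₁,…,S_d`. -/
def IsInvariant (D : DShift d E H₀) (M : Submodule ℂ H₀) : Prop :=
  ∀ k : Fin d, ∀ x ∈ M, D.S k x ∈ M

/-- `M` is a closed invariant subspace for the `d`-shift which is generated, as a closed
invariant subspace, by a set `F` of monomials `z^n ⊗ ζ`: that is, `M` is the smallest
closed invariant subspace containing `F`. -/
def IsMonomialGenerated (D : DShift d E H₀) (M : Submodule ℂ H₀) : Prop :=
  IsClosed (M : Set H₀) ∧ IsInvariant D M ∧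
    ∃ F : Set H₀, (∀ f ∈ F, ∃ n ζ, f = D.mono n ζ) ∧ F ⊆ (M : Set H₀) ∧
      ∀ N : Submodule ℂ H₀, IsClosed (N : Set H₀) → IsInvariant D N →
        F ⊆ (N : Set H₀) → M ≤ N

open scoped InnerProductSpace

theorem le_mul_rpow_of_forall_le_div_succ {x C c k : ℝ} {d : ℕ} (hd : 0 < d) (hC : 0 ≤ C)
    (hc : 0 < c) (hk : 0 < k) (h : ∀ N : ℕ, c * N ^ d ≤ k → x ≤ C / (N + 1)) :
    x ≤ C * c ^ (1 / d : ℝ) * k ^ (-(1 / d : ℝ)) := by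
  set t := (k / c) ^ (1 / d : ℝ) with ht
  have ht_pos : 0 < t := by positivity
  have htd : t ^ d = k / c := by
    rw [ht, ← Real.rpow_natCast, ← Real.rpow_mul (by positivity), one_div,
      inv_mul_cancel₀ (by positivity), Real.rpow_one]
  have hN : c * (⌊t⌋₊ : ℝ) ^ d ≤ k := by
    calc c * (⌊t⌋₊ : ℝ) ^ d ≤ c * t ^ d := by gcongr; exact Nat.floor_le ht_pos.le
      _ = k := by rw [htd]; field_simp
  calc x ≤ C / (⌊t⌋₊ + 1) := h _ hN
    _ ≤ C / t := div_le_div_of_nonneg_left hC ht_pos (Nat.lt_floor_add_one t).le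
    _ = C * c ^ (1 / d : ℝ) * k ^ (-(1 / d : ℝ)) := by
      rw [ht, Real.div_rpow hk.le hc.le, Real.rpow_neg hk.le]
      field_simp

theorem summable_rpow_of_forall_le_div_succ {a : ℕ → ℝ} (ha : ∀ k, 0 ≤ a k) {c d : ℕ}
    {C p : ℝ} (hd : 0 < d) (hp : d < p)
    (h : ∀ N k : ℕ, c * N ^ d ≤ k → a k ≤ C / (N + 1)) :
    Summable fun k => a k ^ p := by
  have hC : 0 ≤ C := by simpa using (ha 0).trans (h 0 0 (by simp [hd.ne']))
  have hp0 : 0 < p := lt_of_le_of_lt (Nat.cast_nonneg d) hp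
  set B := C * ((c : ℝ) + 1) ^ (1 / d : ℝ)
  -- replacing `c` by `c + 1` makes the constant positive
  have hbound : ∀ k : ℕ, a (k + 1) ≤ B * ((k + 1 : ℕ) : ℝ) ^ (-(1 / d : ℝ)) := fun k =>
    le_mul_rpow_of_forall_le_div_succ hd hC (by positivity) (by positivity) fun N hN =>
      h N (k + 1) (by
        have : (c : ℝ) * N ^ d ≤ (k + 1 : ℕ) := le_trans (by gcongr; linarith) hN
        exact_mod_cast this)
  have hsum : Summable fun k : ℕ => B ^ p * ((k + 1 : ℕ) : ℝ) ^ (-(p / d)) := by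
    refine Summable.mul_left _
      ((summable_nat_add_iff (f := fun n : ℕ => (n : ℝ) ^ (-(p / d))) 1).mpr
        (Real.summable_nat_rpow.mpr ?_))
    rw [neg_lt_neg_iff, lt_div_iff₀ (by positivity)]
    simpa using hp
  refine (summable_nat_add_iff 1).mp (Summable.of_nonneg_of_le
    (fun k => Real.rpow_nonneg (ha _) p) (fun k => ?_) hsum)
  calc a (k + 1) ^ p ≤ (B * ((k + 1 : ℕ) : ℝ) ^ (-(1 / d : ℝ))) ^ p :=
        Real.rpow_le_rpow (ha _) (hbound k) hp0.le
    _ = B ^ p * ((k + 1 : ℕ) : ℝ) ^ (-(p / d)) := by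
      rw [Real.mul_rpow (by positivity) (by positivity), ← Real.rpow_mul (by positivity)]
      congr 2
      ring

theorem orthProjCLM_eq_starProjection {H : Type*} [NormedAddCommGroup H]
    [InnerProductSpace ℂ H] [CompleteSpace H] (K : Submodule ℂ H) [CompleteSpace K] :
    orthProjCLM K = K.starProjection := by
  rw [orthProjCLM, dif_pos (completeSpace_coe_iff_isComplete.mp ‹_›).isClosed]
  rfl

theorem approxNum_nonneg {H K : Type*} [NormedAddCommGroup H] [NormedSpace ℂ H]
    [NormedAddCommGroup K] [NormedSpace ℂ K] (T : H →L[ℂ] K) (n : ℕ) :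
    0 ≤ approxNum T n :=
  Real.sInf_nonneg fun _ ⟨_, _, hc⟩ => hc ▸ norm_nonneg _

theorem approxNum_le_norm_sub {H K : Type*} [NormedAddCommGroup H] [NormedSpace ℂ H]
    [NormedAddCommGroup K] [NormedSpace ℂ K] (T F : H →L[ℂ] K) {n : ℕ}
    (hF : Module.rank ℂ (LinearMap.range (F : H →ₗ[ℂ] K)) ≤ n) : approxNum T n ≤ ‖T - F‖ :=
  csInf_le ⟨0, fun _ ⟨_, _, hc⟩ => hc ▸ norm_nonneg _⟩ ⟨F, hF, rfl⟩

theorem rank_range_sum_smulRight_le {H K ι : Type*} [NormedAddCommGroup H] [NormedSpace ℂ H]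
    [NormedAddCommGroup K] [NormedSpace ℂ K] (f : ι → H →L[ℂ] ℂ) (w : ι → K) (S : Finset ι) :
    Module.rank ℂ (LinearMap.range ((∑ j ∈ S, (f j).smulRight (w j) : H →L[ℂ] K) : H →ₗ[ℂ] K))
      ≤ S.card := by
  classical
  have hle : LinearMap.range ((∑ j ∈ S, (f j).smulRight (w j) : H →L[ℂ] K) : H →ₗ[ℂ] K)
      ≤ Submodule.span ℂ (S.image w : Set K) := by
    rintro _ ⟨x, rfl⟩
    simp only [ContinuousLinearMap.coe_coe, FunLike.coe_sum, Finset.sum_apply,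
      ContinuousLinearMap.smulRight_apply]
    exact Submodule.sum_mem _ fun j hj =>
      Submodule.smul_mem _ _ (Submodule.subset_span (Finset.mem_image_of_mem w hj))
  calc _ ≤ Module.rank ℂ (Submodule.span ℂ (S.image w : Set K)) := Submodule.rank_mono hle
    _ ≤ (S.image w).card := rank_span_finset_le _
    _ ≤ S.card := by exact_mod_cast Finset.card_image_le

theorem _root_.HilbertBasis.norm_le_of_norm_repr_le {ι E : Type*} [NormedAddCommGroup E]
    [InnerProductSpace ℂ E] (b : HilbertBasis ι ℂ E) {x y : E} {ε : ℝ} (hε : 0 ≤ ε)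
    (h : ∀ i, ‖b.repr x i‖ ≤ ε * ‖b.repr y i‖) : ‖x‖ ≤ ε * ‖y‖ := by
  rw [← b.repr.norm_map x, ← b.repr.norm_map y, ← Real.norm_of_nonneg hε, ← norm_smul]
  exact lp.norm_mono two_ne_zero fun i => by simpa [norm_smul, abs_of_nonneg hε] using h i

theorem _root_.Orthonormal.exists_hilbertBasis_of_le_topologicalClosure {ι H : Type*}
    [NormedAddCommGroup H] [InnerProductSpace ℂ H] {v : ι → H} (hv : Orthonormal ℂ v)
    {K : Submodule ℂ H} [CompleteSpace K] (hvK : ∀ i, v i ∈ K)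
    (hK : K ≤ (Submodule.span ℂ (Set.range v)).topologicalClosure) :
    ∃ b : HilbertBasis ι ℂ K, ∀ i, (b i : H) = v i := by
  classical
  set w : ι → K := fun i => ⟨v i, hvK i⟩
  have hw : Orthonormal ℂ w := by
    rw [orthonormal_iff_ite] at hv ⊢
    exact fun i j => by rw [Submodule.coe_inner]; exact hv i j
  have hdense : ⊤ ≤ (Submodule.span ℂ (Set.range w)).topologicalClosure := by
    rintro x -
    rw [← SetLike.mem_coe, Submodule.topologicalClosure_coe, closure_subtype,
      ← K.coe_subtype, ← Submodule.map_coe K.subtype, Submodule.map_span, ← Set.range_comp]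
    exact hK x.2
  exact ⟨HilbertBasis.mk hw hdense, fun i => by rw [HilbertBasis.coe_mk]⟩

theorem approxNum_compression_le {H : Type*} [NormedAddCommGroup H] [InnerProductSpace ℂ H]
    [CompleteSpace H] (K : Submodule ℂ H) [CompleteSpace K] {A : H →L[ℂ] H}
    (hA : IsSelfAdjoint A) {ι : Type*} (b : HilbertBasis ι ℂ K) {lam : ι → ℝ}
    (heig : ∀ j, A (b j) = (lam j : ℂ) • (b j : H)) (S : Finset ι) {ε : ℝ} (hε : 0 ≤ ε)
    (hS : ∀ j ∉ S, |lam j| ≤ ε) {k : ℕ} (hk : S.card ≤ k) :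
    approxNum (orthProjCLM K * A * orthProjCLM K) k ≤ ε := by
  classical
  rw [orthProjCLM_eq_starProjection]
  set P := K.starProjection
  set F : H →L[ℂ] H := ∑ j ∈ S, ((lam j : ℂ) • innerSL ℂ (b j : H)).smulRight (b j : H)
  have hFx : ∀ x, F x = ∑ j ∈ S, ((lam j : ℂ) * ⟪(b j : H), x⟫_ℂ) • (b j : H) := fun x => by
    simp [F]
  have hF : ∀ i x, ⟪(b i : H), F x⟫_ℂ = if i ∈ S then (lam i : ℂ) * ⟪(b i : H), x⟫_ℂ else 0 := by
    intro i x
    have hb : ∀ i j, ⟪(b i : H), (b j : H)⟫_ℂ = if i = j then 1 else 0 := fun i j => by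
      rw [← Submodule.coe_inner]; exact orthonormal_iff_ite.mp b.orthonormal i j
    simp [hFx, hb]
  have hPb : ∀ i y, ⟪(b i : H), P y⟫_ℂ = ⟪(b i : H), y⟫_ℂ := fun i y => by
    rw [← K.inner_starProjection_left_eq_right, K.starProjection_eq_self_iff.mpr (b i).2]
  have hPAP : ∀ i x, ⟪(b i : H), (P * A * P) x⟫_ℂ = (lam i : ℂ) * ⟪(b i : H), x⟫_ℂ := by
    intro i x
    change ⟪_, P (A (P x))⟫_ℂ = _
    rw [hPb, ← hA.adjoint_eq, ContinuousLinearMap.adjoint_inner_right, heig, inner_smul_left,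
      Complex.conj_ofReal, hPb]
  -- in the basis `b`, `P A P - F` is diagonal with entries `lam j` off `S` and `0` on `S`
  refine (approxNum_le_norm_sub _ F ((rank_range_sum_smulRight_le _ _ S).trans
    (by exact_mod_cast hk))).trans (ContinuousLinearMap.opNorm_le_bound _ hε fun x => ?_)
  have hy : (P * A * P - F) x ∈ K :=
    sub_mem (K.starProjection_apply_mem _)
      (hFx x ▸ Submodule.sum_mem _ fun j _ => Submodule.smul_mem _ _ (b j).2)
  calc ‖(P * A * P - F) x‖ = ‖(⟨_, hy⟩ : K)‖ := rfl
    _ ≤ ε * ‖(⟨P x, K.starProjection_apply_mem x⟩ : K)‖ := by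
      refine b.norm_le_of_norm_repr_le hε fun i => ?_
      simp only [b.repr_apply_apply, Submodule.coe_inner, _root_.sub_apply,
        inner_sub_right, hPAP, hF, hPb]
      split_ifs with hi
      · simp [mul_nonneg hε (norm_nonneg _)]
      · rw [sub_zero, norm_mul, Complex.norm_real, Real.norm_eq_abs]
        exact mul_le_mul_of_nonneg_right (hS i hi) (norm_nonneg _)
    _ ≤ ε * ‖x‖ := mul_le_mul_of_nonneg_left (K.norm_starProjection_apply_le x) hε

theorem daWeight_pos (n : Fin d → ℕ) : 0 < daWeight n := by
  unfold daWeight; positivity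

def shiftEigenvalue (k : Fin d) (n : Fin d → ℕ) : ℝ :=
  ((n k : ℝ) + 1) / ((∑ i, n i : ℕ) + 1)

theorem daWeight_shift (k : Fin d) (n : Fin d → ℕ) :
    daWeight (fun i => if i = k then n i + 1 else n i) = shiftEigenvalue k n * daWeight n := by
  have hprod : ∏ i, (if i = k then n i + 1 else n i).factorial
      = (∏ i, (n i).factorial) * (n k + 1) := by
    rw [show n k + 1 = ∏ i, if i = k then n k + 1 else 1 by simp, ← Finset.prod_mul_distrib]
    refine Finset.prod_congr rfl fun i _ => ?_
    split_ifs with h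
    · rw [h, Nat.factorial_succ, mul_comm]
    · rw [mul_one]
  have hsum : ∑ i, (if i = k then n i + 1 else n i) = ∑ i, n i + 1 := by
    calc ∑ i, (if i = k then n i + 1 else n i) = ∑ i, (n i + if i = k then 1 else 0) :=
          Finset.sum_congr rfl fun i _ => by split_ifs <;> rfl
      _ = ∑ i, n i + 1 := by simp [Finset.sum_add_distrib]
  rw [daWeight, daWeight, shiftEigenvalue, hprod, hsum, Nat.factorial_succ]
  push_cast
  field_simp

theorem shiftEigenvalue_le {k : Fin d} {n : Fin d → ℕ} {q N : ℕ} (hq : n k ≤ q)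
    (hN : N ≤ ∑ i, n i) : shiftEigenvalue k n ≤ ((q : ℝ) + 1) / (N + 1) := by
  unfold shiftEigenvalue
  gcongr

namespace DShift

variable (D : DShift d E H₀)

theorem ext_inner_mono {x y : H₀} (h : ∀ m η, ⟪x, D.mono m η⟫_ℂ = ⟪y, D.mono m η⟫_ℂ) :
    x = y := by
  refine (Submodule.dense_iff_topologicalClosure_eq_top.mpr D.total).eq_of_inner_left ℂ
    fun v hv => ?_
  induction hv using Submodule.span_induction with
  | mem v hv => obtain ⟨m, η, rfl⟩ := hv; exact h m η
  | zero => simp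
  | add u v _ _ hu hv => rw [inner_add_right, inner_add_right, hu, hv]
  | smul c v _ hv => rw [inner_smul_right, inner_smul_right, hv]

theorem adjoint_S_mul_S_mono [CompleteSpace H₀] (k : Fin d) (n : Fin d → ℕ) (ζ : E) :
    (ContinuousLinearMap.adjoint (D.S k) * D.S k) (D.mono n ζ)
      = (shiftEigenvalue k n : ℂ) • D.mono n ζ := by
  have hshift_inj : ∀ m : Fin d → ℕ,
      (fun i => if i = k then n i + 1 else n i) = (fun i => if i = k then m i + 1 else m i)
        ↔ n = m := fun m => by
    refine ⟨fun h => funext fun i => ?_, fun h => h ▸ rfl⟩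
    have := congrFun h i
    split_ifs at this <;> omega
  refine D.ext_inner_mono fun m η => ?_
  rw [mul_apply_eq_comp, ContinuousLinearMap.adjoint_inner_left, D.shift_mono, D.shift_mono,
    D.inner_mono, inner_smul_left, D.inner_mono, Complex.conj_ofReal]
  simp only [hshift_inj]
  split_ifs with hnm
  · rw [daWeight_shift]; push_cast; ring
  · rw [mul_zero]

section UnitMono

variable {ι : Type*} [Fintype ι] (e : OrthonormalBasis ι ℂ E)

def unitMono (j : (Fin d → ℕ) × ι) : H₀ :=
  (((√(daWeight j.1))⁻¹ : ℝ) : ℂ) • D.mono j.1 (e j.2)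

theorem orthonormal_unitMono : Orthonormal ℂ (D.unitMono e) := by
  classical
  rw [orthonormal_iff_ite]
  rintro ⟨n, a⟩ ⟨m, b⟩
  simp only [unitMono, inner_smul_left, inner_smul_right, D.inner_mono, Complex.conj_ofReal,
    orthonormal_iff_ite.mp e.orthonormal, Prod.mk.injEq]
  by_cases hnm : n = m
  · subst hnm
    have hw : (√(daWeight n) : ℂ) * √(daWeight n) = daWeight n := by
      exact_mod_cast Real.mul_self_sqrt (daWeight_pos n).le
    have hw0 : (√(daWeight n) : ℂ) ≠ 0 := by
      exact_mod_cast (Real.sqrt_pos.mpr (daWeight_pos n)).ne'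
    by_cases hab : a = b
    · simp [hab, ← hw, hw0]
    · simp [hab]
  · simp [hnm]

theorem span_unitMono (s : Set (Fin d → ℕ)) :
    Submodule.span ℂ
        (Set.range (D.unitMono e ∘ Subtype.val : {j : (Fin d → ℕ) × ι // j.1 ∈ s} → H₀))
      = Submodule.span ℂ {x | ∃ n ζ, n ∈ s ∧ x = D.mono n ζ} := by
  apply le_antisymm <;> rw [Submodule.span_le]
  · rintro _ ⟨⟨⟨n, a⟩, hn⟩, rfl⟩
    exact Submodule.smul_mem _ _ (Submodule.subset_span ⟨n, e a, hn, rfl⟩)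
  · rintro _ ⟨n, ζ, hn, rfl⟩
    have hmono : ∀ a, D.mono n (e a) = (√(daWeight n) : ℂ) • D.unitMono e (n, a) := fun a => by
      have hw0 : (√(daWeight n) : ℂ) ≠ 0 := by
        exact_mod_cast (Real.sqrt_pos.mpr (daWeight_pos n)).ne'
      simp [unitMono, smul_smul, hw0]
    rw [← e.sum_repr' ζ, map_sum]
    refine Submodule.sum_mem _ fun a _ => ?_
    rw [map_smul, hmono, smul_smul]
    exact Submodule.smul_mem _ _ (Submodule.subset_span ⟨⟨(n, a), hn⟩, rfl⟩)

end UnitMono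

abbrev monoSubspace (s : Set (Fin d → ℕ)) : Submodule ℂ H₀ :=
  (Submodule.span ℂ {x | ∃ n ζ, n ∈ s ∧ x = D.mono n ζ}).topologicalClosure

theorem approxNum_compression_adjoint_S_mul_S_le [CompleteSpace H₀] [FiniteDimensional ℂ E]
    (k : Fin d) {q : ℕ} {s : Set (Fin d → ℕ)} (hs : ∀ n ∈ s, n k ≤ q) {N m : ℕ}
    (hm : Module.finrank ℂ E * N ^ d ≤ m) :
    approxNum (orthProjCLM (D.monoSubspace s) * (ContinuousLinearMap.adjoint (D.S k) * D.S k) *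
      orthProjCLM (D.monoSubspace s)) m
      ≤ ((q : ℝ) + 1) / (N + 1) := by
  classical
  set e := stdOrthonormalBasis ℂ E
  have hspan := D.span_unitMono e s
  obtain ⟨b, hb⟩ := ((D.orthonormal_unitMono e).comp _ Subtype.val_injective
    ).exists_hilbertBasis_of_le_topologicalClosure (K := D.monoSubspace s)
    (fun j => Submodule.le_topologicalClosure _
      (by rw [← hspan]; exact Submodule.subset_span (Set.mem_range_self j)))
    (by rw [hspan])
  have hA : IsSelfAdjoint (ContinuousLinearMap.adjoint (D.S k) * D.S k) := by
    simpa [ContinuousLinearMap.star_eq_adjoint] using IsSelfAdjoint.star_mul_self (D.S k)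
  set lowDegree := (Fintype.piFinset fun _ : Fin d => Finset.range N).filter (fun n => ∑ i, n i < N)
  refine approxNum_compression_le _ hA b (lam := fun j => shiftEigenvalue k j.1.1)
    (fun j => ?_) ((lowDegree ×ˢ Finset.univ).subtype (·.1 ∈ s)) (by positivity) (fun j hj => ?_) ?_
  · rw [hb, Function.comp_apply, unitMono, map_smul, adjoint_S_mul_S_mono, smul_comm]
  · rw [abs_of_nonneg (by unfold shiftEigenvalue; positivity)]
    refine shiftEigenvalue_le (hs _ j.2) (not_lt.mp fun hlt => hj ?_)
    simp only [Finset.mem_subtype, Finset.mem_product, Finset.mem_univ, and_true, lowDegree,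
      Finset.mem_filter, Fintype.mem_piFinset, Finset.mem_range]
    exact ⟨fun i => (Finset.single_le_sum (fun i _ => Nat.zero_le _)
      (Finset.mem_univ i)).trans_lt hlt, hlt⟩
  · calc _ ≤ (lowDegree ×ˢ Finset.univ).card := by
          rw [Finset.card_subtype]; exact Finset.card_filter_le _ _
      _ ≤ N ^ d * Module.finrank ℂ E := by
        rw [Finset.card_product, Finset.card_univ, Fintype.card_fin]
        gcongr
        exact (Finset.card_filter_le _ _).trans (by simp)
      _ ≤ m := by rw [mul_comm]; exact hm

end DShift

theorem statement9_general {H : Type*} [NormedAddCommGroup H] [InnerProductSpace ℂ H]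
    [CompleteSpace H] (d r : ℕ) (hd : 0 < d)
    (D : DShift d (EuclideanSpace ℂ (Fin r)) H)
    (q : ℕ)
    (K : Submodule ℂ H)
    (hK : K = (Submodule.span ℂ
      {x : H | ∃ n ζ, n ⟨0, hd⟩ ≤ q ∧ x = D.mono n ζ}).topologicalClosure)
    (p : ℝ) (hp : (d : ℝ) < p) :
    MemSchatten p (orthProjCLM K *
      (ContinuousLinearMap.adjoint (D.S ⟨0, hd⟩) * D.S ⟨0, hd⟩) * orthProjCLM K) := by
  subst hK
  exact summable_rpow_of_forall_le_div_succ (approxNum_nonneg _) hd hp fun _ _ hm =>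
    D.approxNum_compression_adjoint_S_mul_S_le ⟨0, hd⟩ (s := {n | n ⟨0, hd⟩ ≤ q})
      (fun _ hn => hn) hm

/-- Let `K ⊆ H²(ℂ^d) ⊗ ℂ^r` be the closed span of the monomials
`z^n ⊗ ζ` with `n₁ ≤ q`.  Then the restriction `B` of `S₁*` to `K` satisfies
`B* B ∈ 𝓛^p` for every `p > d`; equivalently, the compression `P_K S₁* S₁ P_K` belongs
to `𝓛^p` for every `p > d`. -/
theorem statement9 {H : Type*} [NormedAddCommGroup H] [InnerProductSpace ℂ H]
    [CompleteSpace H] (d r : ℕ) (hd : 0 < d) (hr : 0 < r)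
    (D : DShift d (EuclideanSpace ℂ (Fin r)) H)
    (q : ℕ) (hq : 0 < q)
    (K : Submodule ℂ H)
    (hK : K = (Submodule.span ℂ
      {x : H | ∃ n ζ, n ⟨0, hd⟩ ≤ q ∧ x = D.mono n ζ}).topologicalClosure)
    (p : ℝ) (hp : (d : ℝ) < p) :
    MemSchatten p (orthProjCLM K *
      (ContinuousLinearMap.adjoint (D.S ⟨0, hd⟩) * D.S ⟨0, hd⟩) * orthProjCLM K) :=
  statement9_general d r hd D q K hK p hp

end Arveson
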